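/- arXiv:2411.17410 — 4 statements merged into one kernel-verified Lean document; each statement's English description precedes it below -/
import Mathlib

section
/- Let X be a scheme such that every point of X has an open neighborhood meeting only finitely many irreducible components of X. Suppose that for each point x of X, the nilradical of the local ring O_{X,x} is a prime ideal. Then the irreducible components of X are pairwise disjoint, and each irreducible component is open in X. -/
/-!
The generizations of `x` form the image of `Spec 𝒪_{X,x}`, which is irreducible exactly when the
nilradical of `𝒪_{X,x}` is prime. An irreducible component through `x` contains its generic point,
a generization of `x`, so it is the closure of the generizations of `x`: every point lies on a
single component. The complement of a component is then the union of the other components, a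
locally finite union of closed sets.
-/

open AlgebraicGeometry Topology

section IrreducibleComponents

variable {X : Type*} [TopologicalSpace X]

theorem eq_closure_setOf_specializes_of_mem_irreducibleComponents [QuasiSober X] {x : X}
    (hx : IsIrreducible {y | y ⤳ x}) {E : Set X} (hE : E ∈ irreducibleComponents X)
    (hxE : x ∈ E) : E = closure {y | y ⤳ x} := by
  have hgen := hE.1.isGenericPoint_genericPoint (isClosed_of_mem_irreducibleComponents E hE)
  have hsub : E ⊆ closure {y | y ⤳ x} := by
    rw [← hgen.def]
    exact closure_mono (Set.singleton_subset_iff.mpr (hgen.specializes hxE))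
  exact hsub.antisymm (hE.2 hx.closure hsub)

theorem pairwiseDisjoint_irreducibleComponents_of_isIrreducible_setOf_specializes
    [QuasiSober X] (h : ∀ x : X, IsIrreducible {y | y ⤳ x}) :
    (irreducibleComponents X).PairwiseDisjoint id := by
  intro C hC D hD hne
  refine Set.disjoint_left.mpr fun x hxC hxD ↦ hne ?_
  rw [eq_closure_setOf_specializes_of_mem_irreducibleComponents (h x) hC hxC,
    eq_closure_setOf_specializes_of_mem_irreducibleComponents (h x) hD hxD]

theorem isOpen_of_mem_irreducibleComponents_of_locallyFinite
    (hfin : LocallyFinite ((↑) : irreducibleComponents X → Set X))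
    (hdisj : (irreducibleComponents X).PairwiseDisjoint id) {C : Set X}
    (hC : C ∈ irreducibleComponents X) : IsOpen C := by
  have hcompl : Cᶜ = ⋃ D : {D : irreducibleComponents X // (D : Set X) ≠ C}, (D : Set X) := by
    ext y
    simp only [Set.mem_compl_iff, Set.mem_iUnion, Subtype.exists]
    constructor
    · intro hyC
      exact ⟨irreducibleComponent y, irreducibleComponent_mem_irreducibleComponents y,
        fun h ↦ hyC (h ▸ mem_irreducibleComponent), mem_irreducibleComponent⟩
    · rintro ⟨D, hD, hne, hyD⟩ hyC
      exact Set.disjoint_left.mp (hdisj hD hC hne) hyD hyC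
  rw [← isClosed_compl_iff, hcompl]
  exact (hfin.comp_injective Subtype.val_injective).isClosed_iUnion
    fun D ↦ isClosed_of_mem_irreducibleComponents _ D.1.2

end IrreducibleComponents

theorem AlgebraicGeometry.Scheme.isIrreducible_setOf_specializes {X : Scheme} {x : X}
    (h : (_root_.nilradical (X.presheaf.stalk x)).IsPrime) : IsIrreducible {y | y ⤳ x} := by
  have : IrreducibleSpace (Spec (X.presheaf.stalk x)) :=
    PrimeSpectrum.irreducibleSpace_iff_isPrime_nilradical.mpr h
  rw [← Scheme.range_fromSpecStalk, ← Set.image_univ]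
  exact (IrreducibleSpace.isIrreducible_univ _).image _ (X.fromSpecStalk x).continuous.continuousOn

/-- Let `X` be a scheme such that every point of `X` has an open neighborhood
meeting only finitely many irreducible components of `X`.  Suppose that for each point `x` of
`X` the nilradical of the local ring `O_{X,x}` is a prime ideal.  Then the irreducible
components of `X` are pairwise disjoint, and each irreducible component is open in `X`. -/
theorem stmt_0 (X : Scheme)
    (h1 : ∀ x : X, ∃ U : X.Opens, x ∈ U ∧
      {C ∈ irreducibleComponents X | ((U : Set X) ∩ C).Nonempty}.Finite)
    (h2 : ∀ x : X, (nilradical (X.presheaf.stalk x)).IsPrime) :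
    (∀ C ∈ irreducibleComponents X, ∀ D ∈ irreducibleComponents X,
        C ≠ D → Disjoint C D) ∧
    (∀ C ∈ irreducibleComponents X, IsOpen C) := by
  have hdisj : (irreducibleComponents X).PairwiseDisjoint id :=
    pairwiseDisjoint_irreducibleComponents_of_isIrreducible_setOf_specializes
      fun x ↦ Scheme.isIrreducible_setOf_specializes (h2 x)
  have hfin : LocallyFinite ((↑) : irreducibleComponents X → Set X) := fun x ↦ by
    obtain ⟨U, hxU, hU⟩ := h1 x
    refine ⟨U, U.isOpen.mem_nhds hxU, (hU.preimage Subtype.val_injective.injOn).subset ?_⟩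
    intro D hD
    exact ⟨D.2, Set.inter_comm (D : Set X) U ▸ hD⟩
  exact ⟨hdisj, fun C hC ↦ isOpen_of_mem_irreducibleComponents_of_locallyFinite hfin hdisj hC⟩
end

section
/- Let A be a Noetherian integrally closed domain with fraction field K, and let M be a finite torsion-free A-module with an injective A-module endomorphism u. Then det(u ⊗ id_K : M ⊗_A K → M ⊗_A K) lies in A. -/
/-!
Since `M` is finite, `u` is integral over `A` (Cayley–Hamilton), hence so is `u ⊗ K`. Over an
algebraic closure of `K`, every eigenvalue of `u ⊗ K` is a root of a monic polynomial over `A`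
killing it, and the determinant is the product of the eigenvalues; so the determinant is an
element of `K` integral over `A`, i.e. an element of `A`.
-/

open Polynomial

theorem Module.End.HasEigenvalue.isIntegral {R L W : Type*} [CommRing R] [Field L] [Algebra R L]
    [AddCommGroup W] [Module L W] [Module R W] [IsScalarTower R L W]
    {g : Module.End L W} (hg : IsIntegral R g) {μ : L} (hμ : g.HasEigenvalue μ) :
    IsIntegral R μ := by
  obtain ⟨p, hp, hgp⟩ := hg
  obtain ⟨x, hx⟩ := hμ.exists_hasEigenvector
  refine ⟨p, hp, ?_⟩
  have := Module.End.aeval_apply_of_hasEigenvector (p := p.map (algebraMap R L)) hx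
  rw [aeval_map_algebraMap, aeval_def, hgp, LinearMap.zero_apply, eq_comm, smul_eq_zero,
    eval_map] at this
  exact this.resolve_right hx.2

theorem LinearMap.isIntegral_det_of_isIntegral {R K V : Type*} [CommRing R] [Field K]
    [Algebra R K] [AddCommGroup V] [Module K V] [Module R V] [IsScalarTower R K V]
    [FiniteDimensional K V] {f : Module.End K V} (hf : IsIntegral R f) :
    IsIntegral R (LinearMap.det f) := by
  let L := AlgebraicClosure K
  let g := f.baseChange L
  have hg : IsIntegral R g := hf.map (Module.End.baseChangeHom K L V)
  have hdet : algebraMap K L (LinearMap.det f) = g.charpoly.roots.prod := by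
    rw [← LinearMap.det_baseChange,
      Module.End.det_eq_prod_roots_charpoly_of_splits (IsAlgClosed.splits _)]
  rw [← isIntegral_algebraMap_iff (algebraMap K L).injective, hdet]
  refine IsIntegral.multiset_prod fun μ hμ => Module.End.HasEigenvalue.isIntegral hg ?_
  exact (Module.End.hasEigenvalue_iff_isRoot_charpoly g μ).2 (isRoot_of_mem_roots hμ)

theorem stmt_2_general (A : Type*) [CommRing A] [IsDomain A]
    [IsIntegrallyClosed A]
    (M : Type*) [AddCommGroup M] [Module A M] [Module.Finite A M]
    (u : M →ₗ[A] M) :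
    ∃ a : A,
      LinearMap.det (LinearMap.baseChange (FractionRing A) u) =
        algebraMap A (FractionRing A) a := by
  have hu : IsIntegral A (u.baseChange (FractionRing A)) :=
    (Algebra.IsIntegral.isIntegral u).map (Module.End.baseChangeHom A (FractionRing A) M)
  obtain ⟨a, ha⟩ :=
    IsIntegrallyClosed.isIntegral_iff.1 (LinearMap.isIntegral_det_of_isIntegral hu)
  exact ⟨a, ha.symm⟩

/-- Let `A` be a Noetherian integrally closed domain with fraction field `K`,
and let `M` be a finite torsion-free `A`-module with an injective `A`-module endomorphism `u`.
Then `det (u ⊗ id_K : M ⊗_A K → M ⊗_A K)` lies in (the image of) `A`. -/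
theorem stmt_2 (A : Type*) [CommRing A] [IsDomain A] [IsNoetherianRing A]
    [IsIntegrallyClosed A]
    (M : Type*) [AddCommGroup M] [Module A M] [Module.Finite A M]
    [NoZeroSMulDivisors A M]
    (u : M →ₗ[A] M) (hu : Function.Injective u) :
    ∃ a : A,
      LinearMap.det (LinearMap.baseChange (FractionRing A) u) =
        algebraMap A (FractionRing A) a :=
  stmt_2_general A M u
end

section
/- Let X be a normal integral scheme and f : X' → X a finite morphism of schemes. Then there exists an integer n ≥ 0 such that for every invertible O_X-module L, Nm_f(f*L) ≅ L^{⊗n} canonically, where Nm_f : Inv(X') → Inv(X) is the norm functor Nm_{f_*O_{X'}} ∘ f_*. -/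
/-!
The transition functions of `f^* L` are the pullbacks `f^♯ g_ij`, and an element `a` pulled back
from the base acts on the generic fibre `(f_* O_{X'})_η ⊗ K(X)` as the scalar `a`, so its norm is
`a ^ n` with `n` the generic rank. Since sections of an integral scheme inject into its function
field, `Nm (f^♯ a) = a ^ n` holds on every open, and the unit cochain `s = 1` identifies
`Nm_f (f^* L)` with `L^{⊗n}`.
-/

open AlgebraicGeometry CategoryTheory Opposite TopologicalSpace
open scoped TensorProduct

namespace Paper

/-- Restriction of a section of the structure sheaf to a smaller open subset. -/
noncomputable def res (X : Scheme) {U V : X.Opens} (h : V ≤ U) (a : Γ(X, U)) : Γ(X, V) :=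
  X.presheaf.map (homOfLE h).op a

/-- An invertible `O_X`-module (line bundle) presented by a trivializing open cover and a
multiplicative cocycle of transition functions. -/
structure LineBundle (X : Scheme) where
  ι : Type
  U : ι → X.Opens
  covers : ∀ x : X, ∃ i, x ∈ U i
  g : ∀ i j : ι, Γ(X, U i ⊓ U j)
  isUnit : ∀ i j, IsUnit (g i j)
  cocycle : ∀ i j k : ι,
    res X (inf_le_left : U i ⊓ U j ⊓ U k ≤ U i ⊓ U j) (g i j) *
      res X (le_inf (inf_le_left.trans inf_le_right) inf_le_right :
        U i ⊓ U j ⊓ U k ≤ U j ⊓ U k) (g j k) =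
    res X (le_inf (inf_le_left.trans inf_le_left) inf_le_right :
        U i ⊓ U j ⊓ U k ≤ U i ⊓ U k) (g i k)

/-- A global section of a line bundle, given in the trivializations. -/
structure LineBundle.GSection {X : Scheme} (L : LineBundle X) where
  s : ∀ i, Γ(X, L.U i)
  compat : ∀ i j, res X inf_le_left (s i) = L.g i j * res X inf_le_right (s j)

/-- A section is regular if multiplication by it is injective, i.e. all its germs are
nonzerodivisors in the stalks. -/
def LineBundle.GSection.IsRegular {X : Scheme} {L : LineBundle X} (t : L.GSection) : Prop :=
  ∀ (i : L.ι) (x : X) (hx : x ∈ L.U i),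
    X.presheaf.germ (L.U i) x hx (t.s i) ∈ nonZeroDivisors (X.presheaf.stalk x)

/-- The zero locus of a section of a line bundle. -/
def LineBundle.GSection.zeroLocus {X : Scheme} {L : LineBundle X} (t : L.GSection) : Set X :=
  {x : X | ∀ (i : L.ι) (hx : x ∈ L.U i),
    ¬ IsUnit (X.presheaf.germ (L.U i) x hx (t.s i))}

/-- An isomorphism of line bundles, given by comparing trivializations. -/
structure LineBundle.Iso {X : Scheme} (L M : LineBundle X) where
  t : ∀ (i : L.ι) (a : M.ι), Γ(X, L.U i ⊓ M.U a)
  isUnit : ∀ i a, IsUnit (t i a)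
  compat : ∀ (i j : L.ι) (a b : M.ι),
    res X (inf_le_left : (L.U i ⊓ M.U a) ⊓ (L.U j ⊓ M.U b) ≤ L.U i ⊓ M.U a) (t i a) *
      res X (le_inf (inf_le_left.trans inf_le_left) (inf_le_right.trans inf_le_left) :
        (L.U i ⊓ M.U a) ⊓ (L.U j ⊓ M.U b) ≤ L.U i ⊓ L.U j) (L.g i j) =
    res X (le_inf (inf_le_left.trans inf_le_right) (inf_le_right.trans inf_le_right) :
        (L.U i ⊓ M.U a) ⊓ (L.U j ⊓ M.U b) ≤ M.U a ⊓ M.U b) (M.g a b) *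
      res X (inf_le_right : (L.U i ⊓ M.U a) ⊓ (L.U j ⊓ M.U b) ≤ L.U j ⊓ M.U b) (t j b)

set_option synthInstance.maxHeartbeats 1000000 in
set_option maxHeartbeats 1000000 in
/-- Norm datum for a (finite) morphism `f : X' → X` over a normal base: a family of maps
`Γ(X', f⁻¹ U) → Γ(X, U)`, natural in `U`, multiplicative, and computing at each point `x ∈ X`
the determinant of multiplication on `(f_* O_{X'})_x ⊗ Frac(O_{X,x})`. -/
structure NormDatum {X' X : Scheme} (f : X' ⟶ X) where
  Nm : ∀ U : X.Opens, Γ(X', f ⁻¹ᵁ U) → Γ(X, U)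
  map_one : ∀ U : X.Opens, Nm U 1 = 1
  map_mul : ∀ (U : X.Opens) (a b : Γ(X', f ⁻¹ᵁ U)), Nm U (a * b) = Nm U a * Nm U b
  natural : ∀ (U V : X.Opens) (h : V ≤ U) (a : Γ(X', f ⁻¹ᵁ U)),
    Nm V (res X' (show f ⁻¹ᵁ V ≤ f ⁻¹ᵁ U from fun x hx => h hx) a) = res X h (Nm U a)
  germ_det : ∀ (U : X.Opens) (x : X) (hx : x ∈ U) (a : Γ(X', f ⁻¹ᵁ U)),
    letI A := X.presheaf.stalk x
    letI B := (f.base _* X'.presheaf).stalk x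
    letI : Algebra A B :=
      ((TopCat.Presheaf.stalkFunctor CommRingCat x).map f.c).hom.toAlgebra
    algebraMap A (FractionRing A) (X.presheaf.germ U x hx (Nm U a)) =
      LinearMap.det (LinearMap.mulLeft (FractionRing A)
        ((1 : FractionRing A) ⊗ₜ[A] ((f.base _* X'.presheaf).germ U x hx a)))

/-- A scheme is normal if all of its local rings are integrally closed domains. -/
def IsNormalScheme (X : Scheme) : Prop :=
  ∀ x : X, IsDomain (X.presheaf.stalk x) ∧ IsIntegrallyClosed (X.presheaf.stalk x)

/-- Condition (*): a normal scheme each of whose points admits a neighbourhood meeting only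
finitely many irreducible components. -/
def StarCondition (X : Scheme) : Prop :=
  IsNormalScheme X ∧
    ∀ x : X, ∃ U : X.Opens, x ∈ U ∧
      {C ∈ irreducibleComponents X | ((U : Set X) ∩ C).Nonempty}.Finite

section

variable {X' X : Scheme} (f : X' ⟶ X)

noncomputable abbrev stalkPushforwardAlgebra (x : X) :
    Algebra (X.presheaf.stalk x) ((f.base _* X'.presheaf).stalk x) :=
  ((TopCat.Presheaf.stalkFunctor CommRingCat x).map f.c).hom.toAlgebra

noncomputable def genericRankAt (x : X) : ℕ :=
  letI := stalkPushforwardAlgebra f x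
  Module.finrank (FractionRing (X.presheaf.stalk x))
    (FractionRing (X.presheaf.stalk x) ⊗[X.presheaf.stalk x] (f.base _* X'.presheaf).stalk x)

theorem germ_pushforward_app {U : X.Opens} {x : X} (hx : x ∈ U) (a : Γ(X, U)) :
    letI := stalkPushforwardAlgebra f x
    (f.base _* X'.presheaf).germ U x hx (f.app U a) =
      algebraMap _ _ (X.presheaf.germ U x hx a) :=
  (TopCat.Presheaf.stalkFunctor_map_germ_apply U x hx f.c a).symm

end

theorem _root_.LinearMap.det_mulLeft_one_tmul_algebraMap {A B : Type*} [CommRing A] [CommRing B]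
    [Algebra A B] (K : Type*) [Field K] [Algebra A K] (c : A) :
    LinearMap.det (LinearMap.mulLeft K ((1 : K) ⊗ₜ[A] algebraMap A B c)) =
      algebraMap A K c ^ Module.finrank K (K ⊗[A] B) := by
  rw [← Algebra.TensorProduct.algebraMap_apply', IsScalarTower.algebraMap_apply A K (K ⊗[A] B)]
  exact Algebra.norm_algebraMap (algebraMap A K c)

namespace NormDatum

variable {X' X : Scheme} {f : X' ⟶ X} (D : NormDatum f)

theorem germ_nm_app_eq_pow {U : X.Opens} {x : X} (hx : x ∈ U) [IsDomain (X.presheaf.stalk x)]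
    (a : Γ(X, U)) :
    X.presheaf.germ U x hx (D.Nm U (f.app U a)) = X.presheaf.germ U x hx a ^ genericRankAt f x := by
  let := stalkPushforwardAlgebra f x
  apply IsFractionRing.injective (X.presheaf.stalk x) (FractionRing (X.presheaf.stalk x))
  rw [D.germ_det U x hx, germ_pushforward_app, LinearMap.det_mulLeft_one_tmul_algebraMap, map_pow]
  rfl

theorem nm_app_eq_pow [IsIntegral X] (U : X.Opens) (a : Γ(X, U)) :
    D.Nm U (f.app U a) = a ^ genericRankAt f (genericPoint X) := by
  rcases eq_or_ne U ⊥ with rfl | hU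
  · exact Subsingleton.elim _ _
  obtain ⟨x, hx⟩ := U.ne_bot_iff_nonempty.mp hU
  have hη : genericPoint X ∈ U := (genericPoint_specializes x).mem_open U.2 hx
  apply germ_injective_of_isIntegral X _ hη
  rw [D.germ_nm_app_eq_pow hη, map_pow]

end NormDatum

theorem stmt_10_general {X' X : Scheme} [AlgebraicGeometry.IsIntegral X]
    (f : X' ⟶ X) (D : NormDatum f) :
    ∃ n : ℕ, ∀ L : LineBundle X,
      ∃ s : ∀ i : L.ι, Γ(X, L.U i),
        (∀ i, IsUnit (s i)) ∧
        ∀ i j : L.ι,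
          D.Nm (L.U i ⊓ L.U j) (f.app (L.U i ⊓ L.U j) (L.g i j)) *
              res X (inf_le_right : L.U i ⊓ L.U j ≤ L.U j) (s j) =
            res X (inf_le_left : L.U i ⊓ L.U j ≤ L.U i) (s i) * (L.g i j) ^ n :=
  ⟨genericRankAt f (genericPoint X), fun L => ⟨1, fun _ => isUnit_one, fun i j => by
    simp only [Pi.one_apply, res, map_one, mul_one, one_mul, D.nm_app_eq_pow]⟩⟩

/-- Let `X` be a normal integral scheme and `f : X' → X` a finite morphism.
Then there exists an integer `n ≥ 0` such that for every invertible `O_X`-module `L`,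
`Nm_f (f* L) ≅ L^{⊗n}` canonically, where `Nm_f` is the norm functor: in terms of cocycles,
the norm of the pulled-back transition functions of `L` differs from the `n`-th power of the
transition functions of `L` by the coboundary of a family of units. -/
theorem stmt_10 {X' X : Scheme} [AlgebraicGeometry.IsIntegral X]
    (hnormal : IsNormalScheme X)
    (f : X' ⟶ X) [IsFinite f] (D : NormDatum f) :
    ∃ n : ℕ, ∀ L : LineBundle X,
      ∃ s : ∀ i : L.ι, Γ(X, L.U i),
        (∀ i, IsUnit (s i)) ∧
        ∀ i j : L.ι,
          D.Nm (L.U i ⊓ L.U j) (f.app (L.U i ⊓ L.U j) (L.g i j)) *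
              res X (inf_le_right : L.U i ⊓ L.U j ≤ L.U j) (s j) =
            res X (inf_le_left : L.U i ⊓ L.U j ≤ L.U i) (s i) * (L.g i j) ^ n :=
  stmt_10_general f D
end Paper
end

section
/- Let X be a normal scheme satisfying (*) and f : X' → X a finite morphism. The norm functor Nm_f : Inv(X') → Inv(X) preserves injective homomorphisms: if h : L₁ → L₂ is an injective homomorphism of invertible O_{X'}-modules, then Nm_f(h) : Nm_f(L₁) → Nm_f(L₂) is injective. In particular, Nm_f carries regular sections of invertible sheaves to regular sections. -/
/-!
At a point `x` of the base, the image of the germ of `Nm_f h` in `Frac(O_{X,x})` is the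
determinant of multiplication by the germ `b` of `h` on `Frac(O_{X,x}) ⊗ (f_* O_{X'})_x`.
Because `f` is closed, a section of `f_* O_{X'}` whose germs vanish along the fibre over `x`
vanishes near `x`; hence `b` is a nonzerodivisor, since `h` is regular along the fibre.
Multiplication by `b` stays injective after the flat base change to the fraction field, so the
determinant is nonzero, and in the domain `O_{X,x}` a nonzero element is regular.
-/

open AlgebraicGeometry CategoryTheory Opposite TopologicalSpace
open scoped TensorProduct

universe u

namespace TopCat.Presheaf

variable {Y X : TopCat.{u}}

theorem isOpen_setOf_germ_eq_zero (F : Y.Presheaf CommRingCat.{u}) {V : Opens Y}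
    (q : F.obj (op V)) : IsOpen {y | ∃ hy : y ∈ V, F.germ V y hy q = 0} := by
  rw [isOpen_iff_forall_mem_open]
  rintro y ⟨hy, hq⟩
  obtain ⟨N, hyN, iN, _, hres⟩ := F.germ_eq y hy hy q 0 (by rw [hq, map_zero])
  refine ⟨N, fun z hz => ⟨leOfHom iN hz, ?_⟩, N.isOpen, hyN⟩
  rw [← F.germ_res_apply iN z hz q, hres, map_zero, map_zero]

variable (f : Y ⟶ X)

theorem germ_eq_zero_of_pushforward_germ_eq_zero (F : Y.Presheaf CommRingCat.{u}) {U : Opens X}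
    {y : Y} (hy : f y ∈ U) {a : (f _* F).obj (op U)} (ha : (f _* F).germ U (f y) hy a = 0) :
    F.germ ((Opens.map f).obj U) y hy a = 0 := by
  rw [← stalkPushforward_germ, CommRingCat.comp_apply, ha, map_zero]

theorem pushforward_germ_eq_zero_of_isClosedMap (hf : IsClosedMap f)
    (F : Y.Sheaf CommRingCat.{u}) {U : Opens X} {x : X} (hx : x ∈ U)
    (q : (f _* F.presheaf).obj (op U))
    (hq : ∀ (y : Y) (hy : y ∈ (Opens.map f).obj U), f y = x →
      F.presheaf.germ ((Opens.map f).obj U) y hy q = 0) :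
    (f _* F.presheaf).germ U x hx q = 0 := by
  set O := {y | ∃ hy, F.presheaf.germ ((Opens.map f).obj U) y hy q = 0}
  let V : Opens X := U ⊓ ⟨(f '' Oᶜ)ᶜ,
    (hf _ (isOpen_setOf_germ_eq_zero F.presheaf q).isClosed_compl).isOpen_compl⟩
  have hxV : x ∈ V := ⟨hx, fun ⟨y, hyO, hyx⟩ => hyO ⟨_, hq y (show f y ∈ U from hyx ▸ hx) hyx⟩⟩
  have hres : (f _* F.presheaf).map (homOfLE inf_le_left : V ⟶ U).op q = 0 := by
    refine section_ext F _ _ _ fun y hyV => ?_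
    obtain ⟨hy, hqy⟩ : y ∈ O := by_contra fun hyO => hyV.2 ⟨y, hyO, rfl⟩
    rw [map_zero]
    exact (F.presheaf.germ_res_apply _ y hyV q).trans hqy
  rw [← (f _* F.presheaf).germ_res_apply (homOfLE inf_le_left) x hxV q, hres, map_zero]

theorem pushforward_germ_mem_nonZeroDivisors_of_isClosedMap (hf : IsClosedMap f)
    (F : Y.Sheaf CommRingCat.{u}) {U : Opens X} {x : X} (hx : x ∈ U)
    (s : (f _* F.presheaf).obj (op U))
    (hs : ∀ (y : Y) (hy : y ∈ (Opens.map f).obj U), f y = x →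
      F.presheaf.germ ((Opens.map f).obj U) y hy s ∈ nonZeroDivisors (F.presheaf.stalk y)) :
    (f _* F.presheaf).germ U x hx s ∈ nonZeroDivisors ((f _* F.presheaf).stalk x) := by
  refine mem_nonZeroDivisors_iff_right.mpr fun u hu => ?_
  obtain ⟨V, hVU, hxV, t, rfl⟩ := (f _* F.presheaf).exists_le_germ_eq u hx
  let sV := (f _* F.presheaf).map (homOfLE hVU).op s
  have hts : (f _* F.presheaf).germ V x hxV (t * sV) = 0 := by
    rw [map_mul, (f _* F.presheaf).germ_res_apply]
    exact hu
  refine pushforward_germ_eq_zero_of_isClosedMap f hf F hxV t fun y hy hyx => ?_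
  subst hyx
  have h0 := germ_eq_zero_of_pushforward_germ_eq_zero f F.presheaf hxV hts
  rw [map_mul] at h0
  exact mem_nonZeroDivisors_iff_right.mp (hs y (hVU hy) rfl) _
    ((F.presheaf.germ_res_apply _ y hy s).symm ▸ h0)

end TopCat.Presheaf

theorem LinearMap.det_ne_zero_of_injective {R M : Type*} [CommRing R] [IsDomain R]
    [AddCommGroup M] [Module R M] [Module.Free R M] {φ : M →ₗ[R] M}
    (hφ : Function.Injective φ) : φ.det ≠ 0 := fun h =>
  (LinearMap.bot_lt_ker_of_det_eq_zero h).ne' (LinearMap.ker_eq_bot.mpr hφ)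

theorem LinearMap.det_mulLeft_one_tmul_ne_zero {A B K : Type*} [CommRing A] [CommRing B] [Field K]
    [Algebra A B] [Algebra A K] [Module.Flat A K] {b : B} (hb : b ∈ nonZeroDivisors B) :
    LinearMap.det (LinearMap.mulLeft K ((1 : K) ⊗ₜ[A] b)) ≠ 0 := by
  have hb_inj : Function.Injective (LinearMap.mulLeft A b) :=
    (injective_iff_map_eq_zero _).mpr fun y hy => (mem_nonZeroDivisors_iff.mp hb).1 y hy
  apply LinearMap.det_ne_zero_of_injective
  have hbase : LinearMap.mulLeft K ((1 : K) ⊗ₜ[A] b) = (LinearMap.mulLeft A b).baseChange K :=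
    (Algebra.baseChange_lmul b).symm
  rw [hbase, LinearMap.baseChange_eq_ltensor]
  exact Module.Flat.lTensor_preserves_injective_linearMap _ hb_inj

namespace Paper

theorem NormDatum.germ_Nm_mem_nonZeroDivisors {X' X : Scheme} {f : X' ⟶ X} (D : NormDatum f)
    (hf : IsClosedMap f.base) {U : X.Opens} {x : X} (hx : x ∈ U)
    [IsDomain (X.presheaf.stalk x)] (a : Γ(X', f ⁻¹ᵁ U))
    (ha : ∀ (x' : X') (hx' : x' ∈ f ⁻¹ᵁ U), f.base x' = x →
      X'.presheaf.germ (f ⁻¹ᵁ U) x' hx' a ∈ nonZeroDivisors (X'.presheaf.stalk x')) :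
    X.presheaf.germ U x hx (D.Nm U a) ∈ nonZeroDivisors (X.presheaf.stalk x) := by
  let : Algebra (X.presheaf.stalk x) ((f.base _* X'.presheaf).stalk x) :=
    ((TopCat.Presheaf.stalkFunctor CommRingCat x).map f.c).hom.toAlgebra
  have hb : (f.base _* X'.presheaf).germ U x hx a ∈
      nonZeroDivisors ((f.base _* X'.presheaf).stalk x) :=
    TopCat.Presheaf.pushforward_germ_mem_nonZeroDivisors_of_isClosedMap f.base hf X'.sheaf hx a ha
  refine mem_nonZeroDivisors_of_ne_zero fun h0 => ?_
  have hdet := D.germ_det U x hx a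
  rw [h0, map_zero] at hdet
  exact LinearMap.det_mulLeft_one_tmul_ne_zero hb hdet.symm

theorem stmt_11_general {X' X : Scheme} (hstar : StarCondition X)
    (f : X' ⟶ X) [IsFinite f] (D : NormDatum f)
    -- a common trivializing cover by preimages of opens of `X`:
    (κ : Type) (W : κ → X.Opens)
    -- the invertible `O_{X'}`-modules `L₁`, `L₂`, by their cocycles:
    (g₁ g₂ : ∀ a b : κ, Γ(X', f ⁻¹ᵁ (W a ⊓ W b)))
    -- the homomorphism `h : L₁ → L₂`:
    (h : ∀ a : κ, Γ(X', f ⁻¹ᵁ (W a)))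
    (hcompat : ∀ a b : κ,
      res X' (show f ⁻¹ᵁ (W a ⊓ W b) ≤ f ⁻¹ᵁ W a from fun x hx => hx.1) (h a) * g₁ a b =
        g₂ a b *
          res X' (show f ⁻¹ᵁ (W a ⊓ W b) ≤ f ⁻¹ᵁ W b from fun x hx => hx.2) (h b))
    -- `h` is injective:
    (hinj : ∀ (a : κ) (x' : X') (hx' : x' ∈ f ⁻¹ᵁ W a),
      X'.presheaf.germ (f ⁻¹ᵁ W a) x' hx' (h a) ∈ nonZeroDivisors (X'.presheaf.stalk x')) :
    -- conclusion: `Nm_f h` is an injective homomorphism `Nm_f L₁ → Nm_f L₂`: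
    (∀ a b : κ,
      res X (inf_le_left : W a ⊓ W b ≤ W a) (D.Nm (W a) (h a)) *
          D.Nm (W a ⊓ W b) (g₁ a b) =
        D.Nm (W a ⊓ W b) (g₂ a b) *
          res X (inf_le_right : W a ⊓ W b ≤ W b) (D.Nm (W b) (h b))) ∧
    (∀ (a : κ) (x : X) (hx : x ∈ W a),
      X.presheaf.germ (W a) x hx (D.Nm (W a) (h a)) ∈
        nonZeroDivisors (X.presheaf.stalk x)) := by
  refine ⟨fun a b => ?_, fun a x hx => ?_⟩
  · have hNm := congrArg (D.Nm (W a ⊓ W b)) (hcompat a b)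
    rwa [D.map_mul, D.map_mul, D.natural (W a) (W a ⊓ W b) inf_le_left (h a),
      D.natural (W b) (W a ⊓ W b) inf_le_right (h b)] at hNm
  · have := (hstar.1 x).1
    exact D.germ_Nm_mem_nonZeroDivisors f.isClosedMap hx (h a) fun x' hx' _ => hinj a x' hx'

/-- Let `X` be a normal scheme satisfying (*) and `f : X' → X` a finite
morphism.  The norm functor `Nm_f` preserves injective homomorphisms: if `h : L₁ → L₂` is an
injective homomorphism of invertible `O_{X'}`-modules (given here in trivializations over a
cover of `X'` by preimages of opens of `X`, as provided by Lemma `stmt_8`), then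
`Nm_f h : Nm_f L₁ → Nm_f L₂` is injective.  In particular `Nm_f` carries regular sections to
regular sections. -/
theorem stmt_11 {X' X : Scheme} (hstar : StarCondition X)
    (f : X' ⟶ X) [IsFinite f] (D : NormDatum f)
    -- a common trivializing cover by preimages of opens of `X`:
    (κ : Type) (W : κ → X.Opens)
    (hcoversX : ∀ x : X, ∃ a, x ∈ W a)
    (hcovers : ∀ x' : X', ∃ a, x' ∈ f ⁻¹ᵁ W a)
    -- the invertible `O_{X'}`-modules `L₁`, `L₂`, by their cocycles:
    (g₁ g₂ : ∀ a b : κ, Γ(X', f ⁻¹ᵁ (W a ⊓ W b)))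
    (hg₁ : ∀ a b, IsUnit (g₁ a b)) (hg₂ : ∀ a b, IsUnit (g₂ a b))
    -- the homomorphism `h : L₁ → L₂`:
    (h : ∀ a : κ, Γ(X', f ⁻¹ᵁ (W a)))
    (hcompat : ∀ a b : κ,
      res X' (show f ⁻¹ᵁ (W a ⊓ W b) ≤ f ⁻¹ᵁ W a from fun x hx => hx.1) (h a) * g₁ a b =
        g₂ a b *
          res X' (show f ⁻¹ᵁ (W a ⊓ W b) ≤ f ⁻¹ᵁ W b from fun x hx => hx.2) (h b))
    -- `h` is injective:
    (hinj : ∀ (a : κ) (x' : X') (hx' : x' ∈ f ⁻¹ᵁ W a),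
      X'.presheaf.germ (f ⁻¹ᵁ W a) x' hx' (h a) ∈ nonZeroDivisors (X'.presheaf.stalk x')) :
    -- conclusion: `Nm_f h` is an injective homomorphism `Nm_f L₁ → Nm_f L₂`:
    (∀ a b : κ,
      res X (inf_le_left : W a ⊓ W b ≤ W a) (D.Nm (W a) (h a)) *
          D.Nm (W a ⊓ W b) (g₁ a b) =
        D.Nm (W a ⊓ W b) (g₂ a b) *
          res X (inf_le_right : W a ⊓ W b ≤ W b) (D.Nm (W b) (h b))) ∧
    (∀ (a : κ) (x : X) (hx : x ∈ W a),
      X.presheaf.germ (W a) x hx (D.Nm (W a) (h a)) ∈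
        nonZeroDivisors (X.presheaf.stalk x)) :=
  stmt_11_general hstar f D κ W g₁ g₂ h hcompat hinj
end Paper
end
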